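/- arXiv:2602.02913 — 2 statements merged into one kernel-verified Lean document; each statement's English description precedes it below -/
import Mathlib

section
/- If a homogeneous degree-d element of Z⟨a,b⟩ lies in the image of the algebra map sending c ↦ a+b and d ↦ ab+ba, then its cd-preimage is unique; i.e., the map Z⟨c,d⟩ → Z⟨a,b⟩ given by c ↦ a+b, d ↦ ab+ba is injective. -/
open FreeAlgebra

/-- The generator `a` of `ℤ⟨a,b⟩`. -/
noncomputable def genA : FreeAlgebra ℤ Bool := FreeAlgebra.ι ℤ false

/-- The generator `b` of `ℤ⟨a,b⟩`. -/
noncomputable def genB : FreeAlgebra ℤ Bool := FreeAlgebra.ι ℤ true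

/-- The algebra map `ℤ⟨c,d⟩ → ℤ⟨a,b⟩` sending `c ↦ a + b` and `d ↦ ab + ba`.
The domain is the free algebra on two generators, with `false` playing the role of `c`
and `true` playing the role of `d`. -/
noncomputable def cdToAb : FreeAlgebra ℤ Bool →ₐ[ℤ] FreeAlgebra ℤ Bool :=
  FreeAlgebra.lift ℤ (fun x : Bool => if x then genA * genB + genB * genA else genA + genB)

/-!
Write `z ∈ ℤ⟨c,d⟩` as `z = z₀ + c (c⁻¹z) + d (d⁻¹z)`, where the left quotient `x⁻¹z`
(`leftQuotient x z`) has as coefficient of a word `w` the coefficient of `xw` in `z`. Regrouping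
by first letter, `Φ z = z₀ + a (Φ(c⁻¹z) + b Φ(d⁻¹z)) + b (Φ(c⁻¹z) + a Φ(d⁻¹z))`. Such a
decomposition in `ℤ⟨a,b⟩` is unique, so `Φ z = 0` gives `z₀ = 0` and
`Φ(c⁻¹z) = -b Φ(d⁻¹z) = -a Φ(d⁻¹z)`; uniqueness applied to `a Φ(d⁻¹z) - b Φ(d⁻¹z) = 0` then gives
`Φ(c⁻¹z) = Φ(d⁻¹z) = 0`. By induction on words, every coefficient of `z` vanishes.
-/

namespace FreeAlgebra

section CommSemiring

variable {R X : Type*} [CommSemiring R]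

theorem basisFreeMonoid_repr_apply (z : FreeAlgebra R X) (w : FreeMonoid X) :
    (basisFreeMonoid R X).repr z w = (equivMonoidAlgebraFreeMonoid z).coeff w := rfl

theorem basisFreeMonoid_repr_algebraMap (r : R) :
    (basisFreeMonoid R X).repr (algebraMap R _ r) = Finsupp.single 1 r := by
  ext w
  rw [basisFreeMonoid_repr_apply, AlgEquiv.commutes]
  rfl

theorem equivMonoidAlgebraFreeMonoid_ι_mul (x : X) (Y : FreeAlgebra R X) :
    equivMonoidAlgebraFreeMonoid (ι R x * Y) =
      MonoidAlgebra.single (FreeMonoid.of x) 1 * equivMonoidAlgebraFreeMonoid Y := by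
  simp [equivMonoidAlgebraFreeMonoid]

theorem basisFreeMonoid_repr_ι_mul_one (x : X) (Y : FreeAlgebra R X) :
    (basisFreeMonoid R X).repr (ι R x * Y) 1 = 0 := by
  rw [basisFreeMonoid_repr_apply, equivMonoidAlgebraFreeMonoid_ι_mul]
  exact MonoidAlgebra.coeff_single_mul_of_forall_mul_ne _ _ fun v h =>
    FreeMonoid.of_ne_one x (by simpa using congrArg FreeMonoid.length h)

theorem basisFreeMonoid_repr_ι_mul_of_mul (x : X) (Y : FreeAlgebra R X) (w : FreeMonoid X) :
    (basisFreeMonoid R X).repr (ι R x * Y) (FreeMonoid.of x * w) =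
      (basisFreeMonoid R X).repr Y w := by
  rw [basisFreeMonoid_repr_apply, equivMonoidAlgebraFreeMonoid_ι_mul,
    MonoidAlgebra.coeff_single_mul_eq_mul_coeff w fun v _ => by simp, one_mul]
  rfl

theorem basisFreeMonoid_repr_ι_mul_of_mul_of_ne {x y : X} (h : x ≠ y) (Y : FreeAlgebra R X)
    (w : FreeMonoid X) : (basisFreeMonoid R X).repr (ι R x * Y) (FreeMonoid.of y * w) = 0 := by
  rw [basisFreeMonoid_repr_apply, equivMonoidAlgebraFreeMonoid_ι_mul]
  exact MonoidAlgebra.coeff_single_mul_of_forall_mul_ne _ _ fun v hv =>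
    h (List.cons.inj (congrArg FreeMonoid.toList hv)).1

noncomputable def leftQuotient (x : X) : FreeAlgebra R X →ₗ[R] FreeAlgebra R X :=
  (basisFreeMonoid R X).repr.symm.toLinearMap ∘ₗ
    Finsupp.lcomapDomain (FreeMonoid.of x * ·) (mul_right_injective _) ∘ₗ
      (basisFreeMonoid R X).repr.toLinearMap

theorem basisFreeMonoid_repr_leftQuotient (x : X) (z : FreeAlgebra R X) (w : FreeMonoid X) :
    (basisFreeMonoid R X).repr (leftQuotient x z) w =
      (basisFreeMonoid R X).repr z (FreeMonoid.of x * w) := by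
  simp [leftQuotient, Finsupp.lcomapDomain]

theorem leftQuotient_algebraMap (x : X) (r : R) :
    leftQuotient x (algebraMap R (FreeAlgebra R X) r) = 0 :=
  (basisFreeMonoid R X).ext_elem fun w => by
    simp [basisFreeMonoid_repr_leftQuotient, basisFreeMonoid_repr_algebraMap]

theorem leftQuotient_ι_mul (x : X) (Y : FreeAlgebra R X) : leftQuotient x (ι R x * Y) = Y :=
  (basisFreeMonoid R X).ext_elem fun w => by
    rw [basisFreeMonoid_repr_leftQuotient, basisFreeMonoid_repr_ι_mul_of_mul]

theorem leftQuotient_ι_mul_of_ne {x y : X} (h : x ≠ y) (Y : FreeAlgebra R X) :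
    leftQuotient y (ι R x * Y) = 0 :=
  (basisFreeMonoid R X).ext_elem fun w => by
    rw [basisFreeMonoid_repr_leftQuotient, basisFreeMonoid_repr_ι_mul_of_mul_of_ne h, map_zero,
      Finsupp.zero_apply]

theorem eq_algebraMap_add_sum_ι_mul_leftQuotient [Fintype X] (z : FreeAlgebra R X) :
    z = algebraMap R _ ((basisFreeMonoid R X).repr z 1) + ∑ x, ι R x * leftQuotient x z := by
  refine (basisFreeMonoid R X).ext_elem fun w => ?_
  induction w using FreeMonoid.casesOn with
  | one => simp [basisFreeMonoid_repr_algebraMap, basisFreeMonoid_repr_ι_mul_one]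
  | of_mul y w =>
    classical
    rw [map_add, map_sum, Finsupp.add_apply, Finsupp.finsetSum_apply,
      Finset.sum_eq_single y (fun x _ hx => basisFreeMonoid_repr_ι_mul_of_mul_of_ne hx _ _)
        (by simp), basisFreeMonoid_repr_ι_mul_of_mul, basisFreeMonoid_repr_leftQuotient,
      basisFreeMonoid_repr_algebraMap]
    simp

theorem eq_zero_of_algebraMap_add_ι_mul_add_ι_mul_eq_zero {x y : X} (hxy : x ≠ y) {r : R}
    {Y Z : FreeAlgebra R X} (h : algebraMap R (FreeAlgebra R X) r + ι R x * Y + ι R y * Z = 0) :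
    r = 0 ∧ Y = 0 ∧ Z = 0 := by
  refine ⟨?_, ?_, ?_⟩
  · simpa [basisFreeMonoid_repr_algebraMap, basisFreeMonoid_repr_ι_mul_one] using
      congrArg (fun z => (basisFreeMonoid R X).repr z 1) h
  · simpa [leftQuotient_algebraMap, leftQuotient_ι_mul, leftQuotient_ι_mul_of_ne hxy.symm] using
      congrArg (leftQuotient x) h
  · simpa [leftQuotient_algebraMap, leftQuotient_ι_mul, leftQuotient_ι_mul_of_ne hxy] using
      congrArg (leftQuotient y) h

end CommSemiring

theorem eq_zero_of_add_ι_mul_eq_zero_of_add_ι_mul_eq_zero {R X : Type*} [CommRing R] {x y : X}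
    (hxy : x ≠ y) {Y Z : FreeAlgebra R X} (hx : Y + ι R x * Z = 0) (hy : Y + ι R y * Z = 0) :
    Y = 0 ∧ Z = 0 := by
  have hZ : Z = 0 := by
    refine (eq_zero_of_algebraMap_add_ι_mul_add_ι_mul_eq_zero (r := 0) (Z := -Z) hxy ?_).2.1
    calc _ = (Y + ι R x * Z) - (Y + ι R y * Z) := by rw [map_zero]; noncomm_ring
      _ = 0 := by rw [hx, hy, sub_zero]
  exact ⟨by simpa [hZ] using hx, hZ⟩

end FreeAlgebra

theorem cdToAb_eq_leftQuotient (z : FreeAlgebra ℤ Bool) :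
    cdToAb z = algebraMap ℤ _ ((basisFreeMonoid ℤ Bool).repr z 1) +
      genA * (cdToAb (leftQuotient false z) + genB * cdToAb (leftQuotient true z)) +
      genB * (cdToAb (leftQuotient false z) + genA * cdToAb (leftQuotient true z)) := by
  conv_lhs => rw [eq_algebraMap_add_sum_ι_mul_leftQuotient z]
  simp only [map_add, map_mul, AlgHom.commutes, Fintype.sum_bool, cdToAb, lift_ι_apply,
    if_true, Bool.false_eq_true, if_false]
  noncomm_ring

theorem cdToAb_leftQuotient_eq_zero {z : FreeAlgebra ℤ Bool} (hz : cdToAb z = 0) (x : Bool) :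
    cdToAb (leftQuotient x z) = 0 := by
  obtain ⟨-, ha, hb⟩ := eq_zero_of_algebraMap_add_ι_mul_add_ι_mul_eq_zero Bool.false_ne_true
    ((cdToAb_eq_leftQuotient z).symm.trans hz)
  obtain ⟨hc, hd⟩ := eq_zero_of_add_ι_mul_eq_zero_of_add_ι_mul_eq_zero Bool.false_ne_true hb ha
  cases x
  exacts [hc, hd]

theorem basisFreeMonoid_repr_eq_zero_of_cdToAb_eq_zero {z : FreeAlgebra ℤ Bool}
    (hz : cdToAb z = 0) (w : FreeMonoid Bool) : (basisFreeMonoid ℤ Bool).repr z w = 0 := by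
  induction w using FreeMonoid.inductionOn' generalizing z with
  | one =>
    exact (eq_zero_of_algebraMap_add_ι_mul_add_ι_mul_eq_zero Bool.false_ne_true
      ((cdToAb_eq_leftQuotient z).symm.trans hz)).1
  | of_mul x w ih =>
    rw [← basisFreeMonoid_repr_leftQuotient]
    exact ih (cdToAb_leftQuotient_eq_zero hz x)

/-- The map `ℤ⟨c,d⟩ → ℤ⟨a,b⟩`, `c ↦ a+b`, `d ↦ ab+ba`, is injective: cd-preimages
are unique when they exist. -/
theorem cdToAb_injective : Function.Injective ⇑cdToAb :=
  (injective_iff_map_eq_zero _).mpr fun _ hz => (basisFreeMonoid ℤ Bool).repr.map_eq_zero_iff.mp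
    (Finsupp.ext (basisFreeMonoid_repr_eq_zero_of_cdToAb_eq_zero hz))
end

section
/- Two flag f-vectors of rank d+1 that both satisfy the generalized Dehn–Sommerville equations and agree on all subsets K ⊆ [d−1] are equal; that is, the values f_K for K ⊆ [d−1] determine f_K for all K ⊆ [d]. -/
/-- A flag `f`-vector of rank `d+1` (a function on subsets of `[d] = {1,…,d}`) satisfies
the generalized Dehn–Sommerville equations. -/
def GenDehnSommerville (d : ℕ) (f : Finset ℕ → ℤ) : Prop :=
  ∀ K ∈ (Finset.Icc 1 d).powerset, ∀ i ∈ K ∪ {0, d + 1}, ∀ k ∈ K ∪ {0, d + 1},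
    i + 2 ≤ k → (∀ j ∈ K, ¬(i < j ∧ j < k)) →
    ∑ j ∈ Finset.Ioo i k, (-1 : ℤ) ^ (j - i - 1) * f (K ∪ {j}) =
      (1 - (-1 : ℤ) ^ (k - i - 1)) * f K

/-- Two flag `f`-vectors of rank `d+1` satisfying the generalized Dehn–Sommerville
equations that agree on all subsets of `[d−1]` agree on all subsets of `[d]`: the values
`f_K` for `K ⊆ [d−1]` determine all the values `f_K`, `K ⊆ [d]`. -/
theorem dehnSommerville_determined (d : ℕ) (f g : Finset ℕ → ℤ)
    (hf : GenDehnSommerville d f) (hg : GenDehnSommerville d g)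
    (hagree : ∀ K ∈ (Finset.Icc 1 (d - 1)).powerset, f K = g K) :
    ∀ K ∈ (Finset.Icc 1 d).powerset, f K = g K := by
  intro K hK
  rw [Finset.mem_powerset] at hK
  by_cases hd : d ∈ K
  · have hd1 : 1 ≤ d := (Finset.mem_Icc.mp (hK hd)).1
    set K' := K.erase d with hK'def
    have hK'sub : K' ⊆ Finset.Icc 1 (d - 1) := by
      intro x hx
      have hxK := Finset.mem_of_mem_erase hx
      have hxd := Finset.ne_of_mem_erase hx
      have hm := Finset.mem_Icc.mp (hK hxK)
      exact Finset.mem_Icc.mpr ⟨hm.1, by omega⟩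
    set i : ℕ := if h : K'.Nonempty then K'.max' h else 0 with hidef
    have hjle : ∀ j ∈ K', j ≤ i := by
      intro j hj
      rw [hidef, dif_pos ⟨j, hj⟩]
      exact Finset.le_max' _ _ hj
    have hi_le : i ≤ d - 1 := by
      rw [hidef]
      split
      · rename_i h
        exact (Finset.mem_Icc.mp (hK'sub (K'.max'_mem h))).2
      · omega
    have hi_lt : i < d := by omega
    have hi_mem : i ∈ K' ∪ ({0, d + 1} : Finset ℕ) := by
      rw [hidef]
      split
      · rename_i h
        exact Finset.mem_union_left _ (K'.max'_mem h)
      · simp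
    have hK'pow : K' ∈ (Finset.Icc 1 d).powerset :=
      Finset.mem_powerset.mpr (fun x hx => hK (Finset.mem_of_mem_erase hx))
    have hk_mem : d + 1 ∈ K' ∪ ({0, d + 1} : Finset ℕ) := by simp
    have hgap : ∀ j ∈ K', ¬(i < j ∧ j < d + 1) := by
      intro j hj
      have := hjle j hj
      omega
    have hfe := hf K' hK'pow i hi_mem (d + 1) hk_mem (by omega) hgap
    have hge := hg K' hK'pow i hi_mem (d + 1) hk_mem (by omega) hgap
    have hsplit : Finset.Ioo i (d + 1) = insert d (Finset.Ioo i d) := by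
      ext x
      simp only [Finset.mem_Ioo, Finset.mem_insert]
      omega
    have hdn : d ∉ Finset.Ioo i d := by simp
    rw [hsplit, Finset.sum_insert hdn] at hfe hge
    have hKeq : K' ∪ {d} = K := by
      rw [Finset.union_comm, ← Finset.insert_eq]
      exact Finset.insert_erase hd
    rw [hKeq] at hfe hge
    have hsum : ∑ j ∈ Finset.Ioo i d, (-1 : ℤ) ^ (j - i - 1) * f (K' ∪ {j}) =
        ∑ j ∈ Finset.Ioo i d, (-1 : ℤ) ^ (j - i - 1) * g (K' ∪ {j}) := by
      refine Finset.sum_congr rfl fun j hj => ?_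
      have hj' := Finset.mem_Ioo.mp hj
      have hsub : K' ∪ {j} ⊆ Finset.Icc 1 (d - 1) := by
        intro x hx
        rcases Finset.mem_union.mp hx with h | h
        · exact hK'sub h
        · have : x = j := Finset.mem_singleton.mp h
          subst this
          exact Finset.mem_Icc.mpr ⟨by omega, by omega⟩
      rw [hagree _ (Finset.mem_powerset.mpr hsub)]
    have hK'val : f K' = g K' := hagree _ (Finset.mem_powerset.mpr hK'sub)
    have hne : ((-1 : ℤ)) ^ (d - i - 1) ≠ 0 := pow_ne_zero _ (by norm_num)
    refine mul_left_cancel₀ hne ?_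
    rw [hsum, hK'val] at hfe
    linarith [hfe, hge]
  · have hsub : K ⊆ Finset.Icc 1 (d - 1) := by
      intro x hx
      have hm := Finset.mem_Icc.mp (hK hx)
      have : x ≠ d := fun h => hd (h ▸ hx)
      exact Finset.mem_Icc.mpr ⟨hm.1, by omega⟩
    exact hagree _ (Finset.mem_powerset.mpr hsub)
end
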